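/- The relation W·X = Y·W holds if and only if f_{α−1}(M,λ̃) = 0. (That is, the assignment x ↦ X, y ↦ Y defines a non-abelian SL(2,ℂ)-representation of the 2-bridge kmot group G(ε) = ⟨x, y | wx = yw⟩ with w = x^{ε₁}y^{ε₂}⋯x^{ε_{α−2}}y^{ε_{α−1}} exactly when f_{α−1}(M,λ̃) = 0, so f_{α−1} is the Riley polynomial of G(ε).) -/

import Mathlib

abbrev Mat := Matrix (Fin 2) (Fin 2) ℂ

/-- Admissibility of a tuple `i : Fin k → ℕ`: strictly increasing, values in `[1, n]`,
and the `j`-th entry (0-based) has parity `(j + start) % 2`.  `start = 1` gives the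
"odd-start admissible" tuples (`i_j` odd for odd 1-based positions `j`), while
`start = 0` gives the "even-start admissible" tuples. -/
def Adm (n k start : ℕ) (i : Fin k → ℕ) : Prop :=
  (∀ j j' : Fin k, j < j' → i j < i j') ∧
  (∀ j : Fin k, 1 ≤ i j ∧ i j ≤ n) ∧
  (∀ j : Fin k, i j % 2 = (j.val + start) % 2)

instance (n k start : ℕ) : DecidablePred (Adm n k start) := fun _ => by
  unfold Adm; infer_instance

/-- `ĥ(i₁,…,i_k)`: the signed sum of the `ε_t`, `1 ≤ t ≤ n`, omitting the `t` lying in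
the tuple, where `ε_t` gets the sign `(−1)^{#{j : i_j < t}}`; this agrees with
`(ε₁+⋯+ε_{i₁−1}) − (ε_{i₁+1}+⋯+ε_{i₂−1}) + ⋯ + (−1)^k (ε_{i_k+1}+⋯+ε_n)`. -/
def hatSum (n : ℕ) (ε : ℕ → ℤ) {k : ℕ} (i : Fin k → ℕ) : ℤ :=
  ∑ t ∈ Finset.Icc 1 n,
    if ∃ j, i j = t then 0
    else (-1) ^ (Finset.univ.filter fun j : Fin k => i j < t).card * ε t

/-- `ĥᵃˡᵗ(i₁,…,i_k)`: the alternating sum (signs −,+,−,+,… in increasing order)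
of the `ε_t`, `1 ≤ t ≤ n`, with `t` not in the tuple. -/
def hatAltSum (n : ℕ) (ε : ℕ → ℤ) {k : ℕ} (i : Fin k → ℕ) : ℤ :=
  ∑ t ∈ Finset.Icc 1 n,
    if ∃ j, i j = t then 0
    else (-1) ^ ((Finset.Icc 1 t).filter fun s => ¬∃ j, i j = s).card * ε t

/-- `c_k^n(M, ε) = Σ ε_{i₁}⋯ε_{i_k}·M^{ĥ(i₁,…,i_k)}` over odd-start admissible tuples.
For `k = 0` this is `M^{ε₁+⋯+ε_n}`, and it vanishes for `k > n`. -/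
noncomputable def cP (n k : ℕ) (ε : ℕ → ℤ) (M : ℂ) : ℂ :=
  ∑ i : Fin k → Fin (n + 1),
    if Adm n k 1 (fun j => (i j : ℕ))
    then (∏ j : Fin k, (ε (i j : ℕ) : ℂ)) * M ^ hatSum n ε (fun j => (i j : ℕ))
    else 0

/-- `d_k^n(M, ε) = Σ ε_{i₁}⋯ε_{i_k}·M^{−ĥ(i₁,…,i_k)}` over even-start admissible tuples.
For `k = 0` this is `M^{−(ε₁+⋯+ε_n)}`, and it vanishes for `k > n`. -/
noncomputable def dP (n k : ℕ) (ε : ℕ → ℤ) (M : ℂ) : ℂ :=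
  ∑ i : Fin k → Fin (n + 1),
    if Adm n k 0 (fun j => (i j : ℕ))
    then (∏ j : Fin k, (ε (i j : ℕ) : ℂ)) * M ^ (-hatSum n ε (fun j => (i j : ℕ)))
    else 0

/-- `c̃_k^n(M, ε) = Σ ε_{i₁}⋯ε_{i_k}·M^{ĥᵃˡᵗ(i₁,…,i_k)}` over odd-start admissible
tuples.  For `k = 0` this is `M^{−ε₁+ε₂−⋯+(−1)ⁿ εₙ}`, it equals `1` for `k = n = 0`,
and it vanishes for `k > n`. -/
noncomputable def cT (n k : ℕ) (ε : ℕ → ℤ) (M : ℂ) : ℂ :=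
  ∑ i : Fin k → Fin (n + 1),
    if Adm n k 1 (fun j => (i j : ℕ))
    then (∏ j : Fin k, (ε (i j : ℕ) : ℂ)) * M ^ hatAltSum n ε (fun j => (i j : ℕ))
    else 0

/-- `d̃_k^n(M, ε) = Σ ε_{i₁}⋯ε_{i_k}·M^{−ĥᵃˡᵗ(i₁,…,i_k)}` over even-start admissible
tuples. -/
noncomputable def dT (n k : ℕ) (ε : ℕ → ℤ) (M : ℂ) : ℂ :=
  ∑ i : Fin k → Fin (n + 1),
    if Adm n k 0 (fun j => (i j : ℕ))
    then (∏ j : Fin k, (ε (i j : ℕ) : ℂ)) * M ^ (-hatAltSum n ε (fun j => (i j : ℕ)))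
    else 0

/-- The word `W = X^{ε₁} Y^{ε₂} X^{ε₃} Y^{ε₄} ⋯ X^{ε_{α−2}} Y^{ε_{α−1}}`
(letters with odd index are powers of `X`, even index powers of `Y`). -/
noncomputable def Wword (α : ℕ) (ε : ℕ → ℤ) (X Y : Mat) : Mat :=
  ((List.range (α - 1)).map fun i =>
    (if (i + 1) % 2 = 1 then X else Y) ^ ε (i + 1)).prod

open Finset Matrix

section CTlemmas

variable {n k : ℕ} {ε : ℕ → ℤ} {M : ℂ}

lemma adm_inj {k : ℕ} {i : Fin k → ℕ} (hmono : ∀ j j' : Fin k, j < j' → i j < i j') :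
    Function.Injective i := by
  intro a b hab
  by_contra hne
  rcases Ne.lt_or_gt hne with h | h
  · exact absurd hab (hmono a b h).ne
  · exact absurd hab.symm (hmono b a h).ne

lemma adm_filter_eq {n k : ℕ} {i : Fin k → ℕ}
    (hbd : ∀ j : Fin k, 1 ≤ i j ∧ i j ≤ n) :
    (Finset.Icc 1 n).filter (fun s => ∃ j, i j = s) = Finset.image i Finset.univ := by
  ext s
  simp only [mem_filter, mem_image, mem_univ, true_and, mem_Icc]
  constructor
  · rintro ⟨-, j, rfl⟩; exact ⟨j, rfl⟩
  · rintro ⟨j, rfl⟩; exact ⟨⟨(hbd j).1, (hbd j).2⟩, j, rfl⟩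

lemma adm_card_le {n k : ℕ} {i : Fin k → ℕ}
    (hmono : ∀ j j' : Fin k, j < j' → i j < i j')
    (hbd : ∀ j : Fin k, 1 ≤ i j ∧ i j ≤ n) : k ≤ n := by
  have hsub : Finset.image i Finset.univ ⊆ Finset.Icc 1 n := by
    intro s hs
    simp only [mem_image, mem_univ, true_and] at hs
    obtain ⟨j, rfl⟩ := hs
    exact mem_Icc.mpr ⟨(hbd j).1, (hbd j).2⟩
  have h := Finset.card_le_card hsub
  rwa [Finset.card_image_of_injective _ (adm_inj hmono), card_univ, Fintype.card_fin,
    Nat.card_Icc, Nat.add_sub_cancel] at h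

lemma adm_card_nontuple {n k : ℕ} {i : Fin k → ℕ}
    (hmono : ∀ j j' : Fin k, j < j' → i j < i j')
    (hbd : ∀ j : Fin k, 1 ≤ i j ∧ i j ≤ n) :
    ((Finset.Icc 1 n).filter fun s => ¬∃ j, i j = s).card = n - k := by
  have h1 := Finset.card_filter_add_card_filter_not
    (s := Finset.Icc 1 n) (p := fun s => ∃ j, i j = s)
  rw [adm_filter_eq hbd, Finset.card_image_of_injective _ (adm_inj hmono), card_univ,
    Fintype.card_fin, Nat.card_Icc, Nat.add_sub_cancel] at h1
  omega

lemma hatAltSum_succ_top (n : ℕ) (ε : ℕ → ℤ) {k : ℕ} (i : Fin k → ℕ) :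
    hatAltSum (n+1) ε i = hatAltSum n ε i +
      (if ∃ j, i j = n+1 then 0
       else (-1) ^ ((Finset.Icc 1 (n+1)).filter fun s => ¬∃ j, i j = s).card * ε (n+1)) := by
  unfold hatAltSum
  exact Finset.sum_Icc_succ_top (by omega) _

lemma hatAltSum_congr (n : ℕ) (ε : ℕ → ℤ) {k k' : ℕ} (i : Fin k → ℕ) (i' : Fin k' → ℕ)
    (h : ∀ s, 1 ≤ s → s ≤ n → ((∃ j, i j = s) ↔ (∃ j', i' j' = s))) :
    hatAltSum n ε i = hatAltSum n ε i' := by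
  unfold hatAltSum
  refine Finset.sum_congr rfl fun t ht => ?_
  rw [mem_Icc] at ht
  have hcond : (∃ j, i j = t) ↔ (∃ j', i' j' = t) := h t ht.1 ht.2
  have hcard : ((Finset.Icc 1 t).filter fun s => ¬∃ j, i j = s)
      = ((Finset.Icc 1 t).filter fun s => ¬∃ j', i' j' = s) := by
    refine Finset.filter_congr fun s hs => ?_
    rw [mem_Icc] at hs
    exact not_congr (h s hs.1 (hs.2.trans ht.2))
  rw [hcard]
  by_cases hc : ∃ j, i j = t
  · rw [if_pos hc, if_pos (hcond.mp hc)]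
  · rw [if_neg hc, if_neg fun hc' => hc (hcond.mpr hc')]

lemma cT_eq_zero_of_lt (h : n < k) : cT n k ε M = 0 := by
  unfold cT
  refine Finset.sum_eq_zero fun i _ => ?_
  rw [if_neg]
  rintro ⟨hmono, hbd, -⟩
  exact absurd (adm_card_le hmono hbd) (by omega)

lemma cT_zero_zero : cT 0 0 ε M = 1 := by
  unfold cT
  rw [Fintype.sum_subsingleton _ (fun j : Fin 0 => (j.elim0 : Fin 1))]
  rw [if_pos ⟨fun j => j.elim0, fun j => j.elim0, fun j => j.elim0⟩]
  simp [hatAltSum]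

lemma cT_zero_succ (hM0 : M ≠ 0) (n : ℕ) (ε : ℕ → ℤ) :
    cT (n+1) 0 ε M = M ^ ((-1:ℤ)^(n+1) * ε (n+1)) * cT n 0 ε M := by
  unfold cT
  rw [Fintype.sum_subsingleton _ (fun j : Fin 0 => (j.elim0 : Fin (n+2)))]
  rw [Fintype.sum_subsingleton _ (fun j : Fin 0 => (j.elim0 : Fin (n+1)))]
  rw [if_pos ⟨fun j => j.elim0, fun j => j.elim0, fun j => j.elim0⟩,
      if_pos ⟨fun j => j.elim0, fun j => j.elim0, fun j => j.elim0⟩]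
  have h0 : ∀ m : ℕ, hatAltSum (n+1) ε (fun j : Fin 0 => ((j.elim0 : Fin m) : ℕ))
      = hatAltSum n ε (fun j : Fin 0 => ((j.elim0 : Fin m) : ℕ)) + (-1:ℤ)^(n+1) * ε (n+1) := by
    intro m
    rw [hatAltSum_succ_top]
    rw [if_neg (by rintro ⟨j, -⟩; exact j.elim0)]
    congr 2
    rw [Finset.filter_true_of_mem (fun s _ => by rintro ⟨j, -⟩; exact j.elim0)]
    rw [Nat.card_Icc, Nat.add_sub_cancel]
  have h1 : hatAltSum (n+1) ε (fun j : Fin 0 => ((j.elim0 : Fin (n+2)) : ℕ))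
      = hatAltSum n ε (fun j : Fin 0 => ((j.elim0 : Fin (n+1)) : ℕ)) + (-1:ℤ)^(n+1) * ε (n+1) := by
    rw [h0 (n+2)]
    have hfe : (fun j : Fin 0 => ((j.elim0 : Fin (n+2)) : ℕ))
        = (fun j : Fin 0 => ((j.elim0 : Fin (n+1)) : ℕ)) := funext fun j => j.elim0
    rw [hfe]
  rw [h1, zpow_add₀ hM0]
  ring

end CTlemmas
section Rec

open Finset

lemma cT_succ_succ (n k : ℕ) (ε : ℕ → ℤ) (M : ℂ) (hM0' : M ≠ 0) :
    cT (n+1) (k+1) ε M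
      = M ^ ((-1:ℤ)^(n+k) * ε (n+1)) * cT n (k+1) ε M +
        (if (n+1) % 2 = (k+1) % 2 then (ε (n+1) : ℂ) * cT n k ε M else 0) := by
  classical
  have hval : ∀ i : Fin (k+1) → Fin (n+2), Adm (n+1) (k+1) 1 (fun j => (i j : ℕ)) →
      ¬ i (Fin.last k) = Fin.last (n+1) → ∀ j, (i j : ℕ) ≤ n := by
    intro i hA hq j
    obtain ⟨hmono, hbd, -⟩ := hA
    have h1 : (i (Fin.last k) : ℕ) ≠ n + 1 := fun h => hq (Fin.ext h)
    have h2 : (i (Fin.last k) : ℕ) ≤ n + 1 := (hbd (Fin.last k)).2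
    rcases (Fin.le_last j).lt_or_eq with h | h
    · have h3 : (i j : ℕ) < (i (Fin.last k) : ℕ) := hmono j (Fin.last k) h
      omega
    · rw [h]; omega
  have hcT : cT (n+1) (k+1) ε M = ∑ i ∈ Finset.univ.filter
      (fun i : Fin (k+1) → Fin (n+2) => Adm (n+1) (k+1) 1 (fun j => (i j : ℕ))),
      (∏ j, (ε (i j : ℕ) : ℂ)) * M ^ hatAltSum (n+1) ε (fun j => (i j : ℕ)) := by
    unfold cT; rw [Finset.sum_filter]
  rw [hcT, ← Finset.sum_filter_add_sum_filter_not
    (Finset.univ.filter (fun i : Fin (k+1) → Fin (n+2) =>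
      Adm (n+1) (k+1) 1 (fun j => (i j : ℕ))))
    (fun i => i (Fin.last k) = Fin.last (n+1)) _]
  rw [add_comm]
  congr 1
  · -- part B : tuples avoiding n+1
    have hcT2 : cT n (k+1) ε M = ∑ g ∈ Finset.univ.filter
        (fun g : Fin (k+1) → Fin (n+1) => Adm n (k+1) 1 (fun j => (g j : ℕ))),
        (∏ j, (ε (g j : ℕ) : ℂ)) * M ^ hatAltSum n ε (fun j => (g j : ℕ)) := by
      unfold cT; rw [Finset.sum_filter]
    rw [hcT2, Finset.mul_sum]
    refine Finset.sum_nbij'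
      (fun i => fun j : Fin (k+1) => (⟨min (i j : ℕ) n, by omega⟩ : Fin (n+1)))
      (fun g => fun j : Fin (k+1) => ((g j).castSucc : Fin (n+2))) ?_ ?_ ?_ ?_ ?_
    · intro i hi
      simp only [Finset.mem_filter, Finset.mem_univ, true_and] at hi ⊢
      obtain ⟨hA, hq⟩ := hi
      have hle := hval i hA hq
      have hv : ∀ j : Fin (k+1), min (i j : ℕ) n = (i j : ℕ) := fun j => min_eq_left (hle j)
      obtain ⟨hmono, hbd, hpar⟩ := hA
      refine ⟨fun j j' h => ?_, fun j => ?_, fun j => ?_⟩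
      · simp only [hv]; exact hmono j j' h
      · simp only [hv]; exact ⟨(hbd j).1, hle j⟩
      · simp only [hv]; exact hpar j
    · intro g hg
      simp only [Finset.mem_filter, Finset.mem_univ, true_and] at hg ⊢
      obtain ⟨hmono, hbd, hpar⟩ := hg
      refine ⟨⟨fun j j' h => ?_, fun j => ?_, fun j => ?_⟩, ?_⟩
      · simp only [Fin.coe_castSucc]; exact hmono j j' h
      · simp only [Fin.coe_castSucc]; exact ⟨(hbd j).1, (hbd j).2.trans (by omega)⟩
      · simp only [Fin.coe_castSucc]; exact hpar j
      · intro h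
        have h2 : ((g (Fin.last k)).castSucc : ℕ) = n+1 := by rw [h]; rfl
        rw [Fin.coe_castSucc] at h2
        have h3 : (g (Fin.last k) : ℕ) ≤ n := (hbd (Fin.last k)).2
        omega
    · intro i hi
      simp only [Finset.mem_filter, Finset.mem_univ, true_and] at hi
      obtain ⟨hA, hq⟩ := hi
      have hle := hval i hA hq
      funext j
      apply Fin.ext
      simp [min_eq_left (hle j)]
    · intro g hg
      funext j
      apply Fin.ext
      simp [min_eq_left (Fin.is_le (g j))]
    · intro i hi
      simp only [Finset.mem_filter, Finset.mem_univ, true_and] at hi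
      obtain ⟨hA, hq⟩ := hi
      have hle := hval i hA hq
      have hv : ∀ j : Fin (k+1), min (i j : ℕ) n = (i j : ℕ) := fun j => min_eq_left (hle j)
      obtain ⟨hmono, hbd, hpar⟩ := hA
      have hkn : k + 1 ≤ n + 1 := adm_card_le hmono hbd
      have hcard : ((Finset.Icc 1 (n+1)).filter fun s => ¬∃ j, (i j : ℕ) = s).card = n - k := by
        have h := adm_card_nontuple hmono hbd; rw [h]; omega
      have hnot : ¬ ∃ j, (i j : ℕ) = n+1 := by
        rintro ⟨j, hj⟩; have := hle j; omega
      have hsplit := hatAltSum_succ_top n ε (fun j => (i j : ℕ))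
      rw [if_neg hnot, hcard] at hsplit
      have hpowe : ((-1:ℤ))^(n-k) = (-1:ℤ)^(n+k) := by
        rw [show n + k = (n - k) + 2*k by omega, pow_add, pow_mul]
        norm_num
      rw [hpowe] at hsplit
      simp only [Fin.val_mk, hv]
      rw [hsplit, zpow_add₀ hM0']
      ring
  · -- part A : tuples containing n+1
    by_cases hparity : (n+1) % 2 = (k+1) % 2
    · rw [if_pos hparity]
      have hcT3 : cT n k ε M = ∑ g ∈ Finset.univ.filter
          (fun g : Fin k → Fin (n+1) => Adm n k 1 (fun j => (g j : ℕ))),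
          (∏ j, (ε (g j : ℕ) : ℂ)) * M ^ hatAltSum n ε (fun j => (g j : ℕ)) := by
        unfold cT; rw [Finset.sum_filter]
      rw [hcT3, Finset.mul_sum]
      have hlt : ∀ (i : Fin (k+1) → Fin (n+2)),
          Adm (n+1) (k+1) 1 (fun j => (i j : ℕ)) → i (Fin.last k) = Fin.last (n+1) →
          ∀ j₀ : Fin k, (i j₀.castSucc : ℕ) ≤ n := by
        intro i hA hq j₀
        obtain ⟨hmono, hbd, -⟩ := hA
        have h1 : (i j₀.castSucc : ℕ) < (i (Fin.last k) : ℕ) :=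
          hmono j₀.castSucc (Fin.last k) (Fin.castSucc_lt_last j₀)
        have h2 : (i (Fin.last k) : ℕ) = n+1 := by rw [hq]; rfl
        omega
      refine Finset.sum_nbij'
        (fun i => fun j₀ : Fin k => (⟨min (i j₀.castSucc : ℕ) n, by omega⟩ : Fin (n+1)))
        (fun g => Fin.snoc (fun j₀ : Fin k => ((g j₀).castSucc : Fin (n+2))) (Fin.last (n+1)))
        ?_ ?_ ?_ ?_ ?_
      · intro i hi
        simp only [Finset.mem_filter, Finset.mem_univ, true_and] at hi ⊢
        obtain ⟨hA, hq⟩ := hi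
        have hle := hlt i hA hq
        have hv : ∀ j₀ : Fin k, min (i j₀.castSucc : ℕ) n = (i j₀.castSucc : ℕ) :=
          fun j₀ => min_eq_left (hle j₀)
        obtain ⟨hmono, hbd, hpar⟩ := hA
        refine ⟨fun j j' h => ?_, fun j => ?_, fun j => ?_⟩
        · simp only [hv]
          exact hmono j.castSucc j'.castSucc (by rwa [Fin.castSucc_lt_castSucc_iff])
        · simp only [hv]; exact ⟨(hbd j.castSucc).1, hle j⟩
        · simp only [hv]
          have := hpar j.castSucc
          rwa [Fin.coe_castSucc] at this
      · intro g hg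
        simp only [Finset.mem_filter, Finset.mem_univ, true_and] at hg ⊢
        obtain ⟨hmono, hbd, hpar⟩ := hg
        have hv1 : ∀ j₀ : Fin k,
            ((Fin.snoc (fun j₀ : Fin k => ((g j₀).castSucc : Fin (n+2)))
              (Fin.last (n+1)) : Fin (k+1) → Fin (n+2)) j₀.castSucc : ℕ) = (g j₀ : ℕ) := by
          intro j₀; rw [Fin.snoc_castSucc, Fin.coe_castSucc]
        have hv2 : ((Fin.snoc (fun j₀ : Fin k => ((g j₀).castSucc : Fin (n+2)))
              (Fin.last (n+1)) : Fin (k+1) → Fin (n+2)) (Fin.last k) : ℕ) = n+1 := by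
          rw [Fin.snoc_last, Fin.val_last]
        refine ⟨⟨fun j j' h => ?_, fun j => ?_, fun j => ?_⟩, Fin.snoc_last _ _⟩
        · induction j' using Fin.lastCases with
          | last =>
            beta_reduce
            rw [hv2]
            induction j using Fin.lastCases with
            | last => exact absurd h (lt_irrefl _)
            | cast j₀ =>
              rw [hv1]
              have h4 : (g j₀ : ℕ) ≤ n := (hbd j₀).2
              omega
          | cast j₀' =>
            induction j using Fin.lastCases with
            | last => exact absurd (h.trans (Fin.castSucc_lt_last j₀')) (lt_irrefl _)
            | cast j₀ =>
              beta_reduce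
              rw [hv1, hv1]
              exact hmono j₀ j₀' (by rwa [Fin.castSucc_lt_castSucc_iff] at h)
        · induction j using Fin.lastCases with
          | last =>
            beta_reduce
            rw [hv2]
            omega
          | cast j₀ =>
            beta_reduce
            rw [hv1]
            exact ⟨(hbd j₀).1, (hbd j₀).2.trans (by omega)⟩
        · induction j using Fin.lastCases with
          | last =>
            beta_reduce
            rw [hv2, Fin.val_last]
            exact hparity
          | cast j₀ =>
            beta_reduce
            rw [hv1, Fin.coe_castSucc]
            exact hpar j₀
      · intro i hi
        simp only [Finset.mem_filter, Finset.mem_univ, true_and] at hi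
        obtain ⟨hA, hq⟩ := hi
        have hle := hlt i hA hq
        funext j
        induction j using Fin.lastCases with
        | last => beta_reduce; rw [Fin.snoc_last]; exact hq.symm
        | cast j₀ =>
          beta_reduce
          rw [Fin.snoc_castSucc]
          apply Fin.ext
          simp [min_eq_left (hle j₀)]
      · intro g hg
        funext j₀
        apply Fin.ext
        beta_reduce
        simp only [Fin.snoc_castSucc]
        simp [min_eq_left (Fin.is_le (g j₀))]
      · intro i hi
        simp only [Finset.mem_filter, Finset.mem_univ, true_and] at hi
        obtain ⟨hA, hq⟩ := hi
        have hle := hlt i hA hq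
        have hv : ∀ j₀ : Fin k, min (i j₀.castSucc : ℕ) n = (i j₀.castSucc : ℕ) :=
          fun j₀ => min_eq_left (hle j₀)
        have hlastv : (i (Fin.last k) : ℕ) = n + 1 := by rw [hq]; rfl
        have hprod : (∏ j, (ε (i j : ℕ) : ℂ))
            = (∏ j₀ : Fin k, (ε (i j₀.castSucc : ℕ) : ℂ)) * (ε (n+1) : ℂ) := by
          rw [Fin.prod_univ_castSucc, hlastv]
        have hmem : ∃ j, (i j : ℕ) = n+1 := ⟨Fin.last k, hlastv⟩
        have hsplit := hatAltSum_succ_top n ε (fun j => (i j : ℕ))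
        rw [if_pos hmem, add_zero] at hsplit
        have hcongr : hatAltSum n ε (fun j => (i j : ℕ))
            = hatAltSum n ε (fun j₀ : Fin k => (i j₀.castSucc : ℕ)) := by
          refine hatAltSum_congr n ε _ _ fun s hs1 hs2 => ?_
          constructor
          · rintro ⟨j, hj⟩
            induction j using Fin.lastCases with
            | last => rw [hlastv] at hj; omega
            | cast j₀ => exact ⟨j₀, hj⟩
          · rintro ⟨j₀, hj⟩; exact ⟨j₀.castSucc, hj⟩
        simp only [Fin.val_mk, hv]
        rw [hprod, hsplit, hcongr]
        ring
    · rw [if_neg hparity]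
      have hempty : ((Finset.univ.filter (fun i : Fin (k+1) → Fin (n+2) =>
          Adm (n+1) (k+1) 1 (fun j => (i j : ℕ)))).filter
          (fun i => i (Fin.last k) = Fin.last (n+1))) = ∅ := by
        rw [Finset.filter_eq_empty_iff]
        intro i hi
        simp only [Finset.mem_filter, Finset.mem_univ, true_and] at hi
        obtain ⟨-, -, hpar⟩ := hi
        intro hq
        have h1 := hpar (Fin.last k)
        have h2 : (i (Fin.last k) : ℕ) = n+1 := by rw [hq]; rfl
        beta_reduce at h1
        rw [h2, Fin.val_last] at h1
        exact hparity (by omega)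
      rw [hempty, Finset.sum_empty]

end Rec
section Row

open Finset Matrix

-- specialized recursions
lemma cT_rec_odd_top (m k : ℕ) (ε : ℕ → ℤ) (M : ℂ) (hM0 : M ≠ 0) (hp : (m+1) % 2 = 1) :
    cT (m+1) (2*(k+1)) ε M = M ^ (-(ε (m+1))) * cT m (2*(k+1)) ε M := by
  rw [show 2*(k+1) = (2*k+1)+1 by ring, cT_succ_succ m (2*k+1) ε M hM0,
    if_neg (by omega), add_zero]
  have hodd : Odd (m + (2*k+1)) := by rw [Nat.odd_iff]; omega
  rw [hodd.neg_one_pow, neg_one_mul]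

lemma cT_rec_odd_odd (m k : ℕ) (ε : ℕ → ℤ) (M : ℂ) (hM0 : M ≠ 0) (hp : (m+1) % 2 = 1) :
    cT (m+1) (2*k+1) ε M
      = M ^ (ε (m+1)) * cT m (2*k+1) ε M + (ε (m+1) : ℂ) * cT m (2*k) ε M := by
  rw [cT_succ_succ m (2*k) ε M hM0, if_pos (by omega)]
  have heven : Even (m + 2*k) := by rw [Nat.even_iff]; omega
  rw [heven.neg_one_pow, one_mul]

lemma cT_rec_even_top (m k : ℕ) (ε : ℕ → ℤ) (M : ℂ) (hM0 : M ≠ 0) (hp : (m+1) % 2 = 0) :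
    cT (m+1) (2*(k+1)) ε M
      = M ^ (ε (m+1)) * cT m (2*(k+1)) ε M + (ε (m+1) : ℂ) * cT m (2*k+1) ε M := by
  rw [show 2*(k+1) = (2*k+1)+1 by ring, cT_succ_succ m (2*k+1) ε M hM0,
    if_pos (by omega)]
  have heven : Even (m + (2*k+1)) := by rw [Nat.even_iff]; omega
  rw [heven.neg_one_pow, one_mul]

lemma cT_rec_even_odd (m k : ℕ) (ε : ℕ → ℤ) (M : ℂ) (hM0 : M ≠ 0) (hp : (m+1) % 2 = 0) :
    cT (m+1) (2*k+1) ε M = M ^ (-(ε (m+1))) * cT m (2*k+1) ε M := by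
  rw [cT_succ_succ m (2*k) ε M hM0, if_neg (by omega), add_zero]
  have hodd : Odd (m + 2*k) := by rw [Nat.odd_iff]; omega
  rw [hodd.neg_one_pow, neg_one_mul]

lemma cT_rec_zero_odd (m : ℕ) (ε : ℕ → ℤ) (M : ℂ) (hM0 : M ≠ 0) (hp : (m+1) % 2 = 1) :
    cT (m+1) 0 ε M = M ^ (-(ε (m+1))) * cT m 0 ε M := by
  rw [cT_zero_succ hM0 m ε]
  have hodd : Odd (m+1) := by rw [Nat.odd_iff]; omega
  rw [hodd.neg_one_pow, neg_one_mul]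

lemma cT_rec_zero_even (m : ℕ) (ε : ℕ → ℤ) (M : ℂ) (hM0 : M ≠ 0) (hp : (m+1) % 2 = 0) :
    cT (m+1) 0 ε M = M ^ (ε (m+1)) * cT m 0 ε M := by
  rw [cT_zero_succ hM0 m ε]
  have heven : Even (m+1) := by rw [Nat.even_iff]; omega
  rw [heven.neg_one_pow, one_mul]

noncomputable def wp (ε : ℕ → ℤ) (X Y : Mat) (m : ℕ) : Mat :=
  ((List.range m).map fun i => (if (i + 1) % 2 = 1 then X else Y) ^ ε (i + 1)).prod

lemma Wword_eq_wp (α : ℕ) (ε : ℕ → ℤ) (X Y : Mat) : Wword α ε X Y = wp ε X Y (α - 1) := rfl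

lemma wp_zero (ε : ℕ → ℤ) (X Y : Mat) : wp ε X Y 0 = 1 := by simp [wp]

lemma wp_succ (ε : ℕ → ℤ) (X Y : Mat) (m : ℕ) :
    wp ε X Y (m+1) = wp ε X Y m * (if (m + 1) % 2 = 1 then X else Y) ^ ε (m + 1) := by
  unfold wp
  rw [List.range_succ, List.map_append, List.prod_append]
  simp

lemma X_inv (M : ℂ) (hM0 : M ≠ 0) : (!![M, 1; 0, M⁻¹] : Mat)⁻¹ = !![M⁻¹, -1; 0, M] := by
  apply Matrix.inv_eq_right_inv
  ext i j
  fin_cases i <;> fin_cases j <;>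
    simp [Matrix.mul_apply, Fin.sum_univ_two, Matrix.one_apply,
      mul_inv_cancel₀ hM0, inv_mul_cancel₀ hM0]

lemma Xt_inv (M : ℂ) (hM0 : M ≠ 0) : (!![M⁻¹, 1; 0, M] : Mat)⁻¹ = !![M, -1; 0, M⁻¹] := by
  apply Matrix.inv_eq_right_inv
  ext i j
  fin_cases i <;> fin_cases j <;>
    simp [Matrix.mul_apply, Fin.sum_univ_two, Matrix.one_apply,
      mul_inv_cancel₀ hM0, inv_mul_cancel₀ hM0]

lemma Y_inv (M lam : ℂ) (hM0 : M ≠ 0) :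
    (!![M, 0; lam, M⁻¹] : Mat)⁻¹ = !![M⁻¹, 0; -lam, M] := by
  apply Matrix.inv_eq_right_inv
  ext i j
  fin_cases i <;> fin_cases j <;>
    simp [Matrix.mul_apply, Fin.sum_univ_two, Matrix.one_apply,
      mul_inv_cancel₀ hM0, inv_mul_cancel₀ hM0]
  ring

lemma Xt_zpow (M : ℂ) (hM0 : M ≠ 0) (e : ℤ) (he : e = 1 ∨ e = -1) :
    (!![M⁻¹, 1; 0, M] : Mat) ^ e = !![M ^ (-e), (e : ℂ); 0, M ^ e] := by
  rcases he with rfl | rfl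
  · norm_num
  · rw [Matrix.zpow_neg_one, Xt_inv M hM0]
    norm_num

lemma Yt_zpow (M lamT : ℂ) (hM0 : M ≠ 0) (e : ℤ) (he : e = 1 ∨ e = -1) :
    (!![M, 0; lamT, M⁻¹] : Mat) ^ e = !![M ^ e, 0; (e : ℂ) * lamT, M ^ (-e)] := by
  rcases he with rfl | rfl
  · norm_num
  · rw [Matrix.zpow_neg_one, Y_inv M lamT hM0]
    norm_num

lemma wp_row (M lamT : ℂ) (hM0 : M ≠ 0) (ε : ℕ → ℤ) (N : ℕ)
    (hε : ∀ t, 1 ≤ t → t ≤ N → ε t = 1 ∨ ε t = -1) :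
    ∀ m, m ≤ N →
      (wp ε !![M⁻¹, 1; 0, M] !![M, 0; lamT, M⁻¹] m) 0 0
          = (∑ k ∈ Finset.range (m+1), cT m (2*k) ε M * lamT ^ k) ∧
      (wp ε !![M⁻¹, 1; 0, M] !![M, 0; lamT, M⁻¹] m) 0 1
          = (∑ k ∈ Finset.range (m+1), cT m (2*k+1) ε M * lamT ^ k) := by
  intro m
  induction m with
  | zero =>
    intro _
    rw [wp_zero]
    constructor
    · rw [Finset.sum_range_one]
      norm_num [Matrix.one_apply, cT_zero_zero]
    · rw [Finset.sum_range_one]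
      norm_num [Matrix.one_apply, cT_eq_zero_of_lt (show 0 < 1 by omega)]
  | succ m ih =>
    intro hm
    obtain ⟨ih0, ih1⟩ := ih (by omega)
    have he := hε (m+1) (by omega) (by omega)
    rw [wp_succ]
    rcases Nat.even_or_odd (m+1) with hp | hp
    · -- m+1 even : letter is Yt
      have hp' : (m+1) % 2 = 0 := Nat.even_iff.mp hp
      rw [if_neg (by omega), Yt_zpow M lamT hM0 _ he]
      constructor
      · simp only [Matrix.mul_apply, Fin.sum_univ_two, Matrix.of_apply, Matrix.cons_val',
          Matrix.cons_val_zero, Matrix.cons_val_one, Matrix.head_cons,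
          Matrix.head_fin_const, Matrix.empty_val', Matrix.cons_val_fin_one]
        rw [ih0, ih1]
        rw [Finset.sum_range_succ' (fun k => cT (m+1) (2*k) ε M * lamT ^ k) (m+1)]
        have hterm : ∀ k, cT (m+1) (2*(k+1)) ε M * lamT ^ (k+1)
            = M ^ (ε (m+1)) * (cT m (2*(k+1)) ε M * lamT ^ (k+1))
              + (ε (m+1) : ℂ) * lamT * (cT m (2*k+1) ε M * lamT ^ k) := by
          intro k
          rw [cT_rec_even_top m k ε M hM0 hp']
          ring
        rw [Finset.sum_congr rfl (fun k _ => hterm k), Finset.sum_add_distrib,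
          ← Finset.mul_sum, ← Finset.mul_sum]
        rw [show (2*0 : ℕ) = 0 by ring, cT_rec_zero_even m ε M hM0 hp']
        rw [show M ^ (ε (m+1)) * cT m 0 ε M * lamT ^ 0
            = M ^ (ε (m+1)) * (cT m (2*0) ε M * lamT ^ 0) by norm_num]
        rw [add_assoc, add_comm (((ε (m+1) : ℂ)) * lamT * _), ← add_assoc, ← mul_add,
          ← Finset.sum_range_succ' (fun k => cT m (2*k) ε M * lamT ^ k) (m+1)]
        rw [Finset.sum_range_succ (fun k => cT m (2*k) ε M * lamT ^ k) (m+1),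
          cT_eq_zero_of_lt (show m < 2*(m+1) by omega)]
        ring
      · simp only [Matrix.mul_apply, Fin.sum_univ_two, Matrix.of_apply, Matrix.cons_val',
          Matrix.cons_val_zero, Matrix.cons_val_one, Matrix.head_cons,
          Matrix.head_fin_const, Matrix.empty_val', Matrix.cons_val_fin_one]
        rw [ih1]
        have hterm : ∀ k, cT (m+1) (2*k+1) ε M * lamT ^ k
            = M ^ (-(ε (m+1))) * (cT m (2*k+1) ε M * lamT ^ k) := by
          intro k
          rw [cT_rec_even_odd m k ε M hM0 hp']
          ring
        rw [Finset.sum_congr rfl (fun k _ => hterm k), ← Finset.mul_sum]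
        rw [Finset.sum_range_succ (fun k => cT m (2*k+1) ε M * lamT ^ k) (m+1),
          cT_eq_zero_of_lt (show m < 2*(m+1)+1 by omega)]
        ring
    · -- m+1 odd : letter is Xt
      have hp' : (m+1) % 2 = 1 := Nat.odd_iff.mp hp
      rw [if_pos hp', Xt_zpow M hM0 _ he]
      constructor
      · simp only [Matrix.mul_apply, Fin.sum_univ_two, Matrix.of_apply, Matrix.cons_val',
          Matrix.cons_val_zero, Matrix.cons_val_one, Matrix.head_cons,
          Matrix.head_fin_const, Matrix.empty_val', Matrix.cons_val_fin_one]
        rw [ih0]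
        rw [Finset.sum_range_succ' (fun k => cT (m+1) (2*k) ε M * lamT ^ k) (m+1)]
        have hterm : ∀ k, cT (m+1) (2*(k+1)) ε M * lamT ^ (k+1)
            = M ^ (-(ε (m+1))) * (cT m (2*(k+1)) ε M * lamT ^ (k+1)) := by
          intro k
          rw [cT_rec_odd_top m k ε M hM0 hp']
          ring
        rw [Finset.sum_congr rfl (fun k _ => hterm k), ← Finset.mul_sum]
        rw [show (2*0 : ℕ) = 0 by ring, cT_rec_zero_odd m ε M hM0 hp']
        rw [show M ^ (-(ε (m+1))) * cT m 0 ε M * lamT ^ 0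
            = M ^ (-(ε (m+1))) * (cT m (2*0) ε M * lamT ^ 0) by norm_num]
        rw [← mul_add,
          ← Finset.sum_range_succ' (fun k => cT m (2*k) ε M * lamT ^ k) (m+1)]
        rw [Finset.sum_range_succ (fun k => cT m (2*k) ε M * lamT ^ k) (m+1),
          cT_eq_zero_of_lt (show m < 2*(m+1) by omega)]
        ring
      · simp only [Matrix.mul_apply, Fin.sum_univ_two, Matrix.of_apply, Matrix.cons_val',
          Matrix.cons_val_zero, Matrix.cons_val_one, Matrix.head_cons,
          Matrix.head_fin_const, Matrix.empty_val', Matrix.cons_val_fin_one]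
        rw [ih0, ih1]
        have hterm : ∀ k, cT (m+1) (2*k+1) ε M * lamT ^ k
            = M ^ (ε (m+1)) * (cT m (2*k+1) ε M * lamT ^ k)
              + (ε (m+1) : ℂ) * (cT m (2*k) ε M * lamT ^ k) := by
          intro k
          rw [cT_rec_odd_odd m k ε M hM0 hp']
          ring
        rw [Finset.sum_congr rfl (fun k _ => hterm k), Finset.sum_add_distrib,
          ← Finset.mul_sum, ← Finset.mul_sum]
        rw [Finset.sum_range_succ (fun k => cT m (2*k+1) ε M * lamT ^ k) (m+1),
          cT_eq_zero_of_lt (show m < 2*(m+1)+1 by omega),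
          Finset.sum_range_succ (fun k => cT m (2*k) ε M * lamT ^ k) (m+1),
          cT_eq_zero_of_lt (show m < 2*(m+1) by omega)]
        ring

end Row
section Sym

open Finset Matrix

lemma commute_prod (J : Mat) (g h : ℕ → Mat) (n : ℕ) (H : ∀ i, i < n → J * g i = h i * J) :
    J * ((List.range n).map g).prod = ((List.range n).map h).prod * J := by
  induction n with
  | zero => simp
  | succ n ih =>
    rw [List.range_succ, List.map_append, List.map_append, List.prod_append, List.prod_append]
    simp only [List.map_cons, List.map_nil, List.prod_cons, List.prod_nil, mul_one]
    rw [← mul_assoc, ih (fun i hi => H i (by omega)), mul_assoc, H n (by omega), mul_assoc]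

lemma reverse_map_range {β : Type*} (F : ℕ → β) (n : ℕ) :
    ((List.range n).map F).reverse = (List.range n).map (fun s => F (n - 1 - s)) := by
  apply List.ext_getElem
  · simp
  · intro i h1 h2
    simp only [List.length_reverse, List.length_map, List.length_range] at h1 h2
    rw [List.getElem_reverse]
    simp only [List.getElem_map, List.getElem_range, List.length_map, List.length_range]

lemma commute_inv (P A B : Mat) (hA : IsUnit A.det) (hB : IsUnit B.det)
    (h : P * A = B * P) : P * A⁻¹ = B⁻¹ * P := by
  have hBB : B⁻¹ * B = 1 := Matrix.nonsing_inv_mul B hB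
  have hAA : A * A⁻¹ = 1 := Matrix.mul_nonsing_inv A hA
  calc P * A⁻¹ = (B⁻¹ * B) * (P * A⁻¹) := by rw [hBB, one_mul]
    _ = B⁻¹ * ((B * P) * A⁻¹) := by rw [mul_assoc, mul_assoc]
    _ = B⁻¹ * ((P * A) * A⁻¹) := by rw [h]
    _ = B⁻¹ * (P * (A * A⁻¹)) := by rw [mul_assoc]
    _ = B⁻¹ * P := by rw [hAA, mul_one]

lemma commute_zpow (P A B : Mat) (hA : IsUnit A.det) (hB : IsUnit B.det)
    (h : P * A = B * P) (e : ℤ) (he : e = 1 ∨ e = -1) : P * A ^ e = B ^ e * P := by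
  rcases he with rfl | rfl
  · simpa using h
  · rw [Matrix.zpow_neg_one, Matrix.zpow_neg_one]
    exact commute_inv P A B hA hB h

lemma commute_T_inv (Jm A B : Mat) (hA : IsUnit A.det) (hB : IsUnit B.det)
    (h : A * Jm = Jm * Bᵀ) : A⁻¹ * Jm = Jm * (B⁻¹)ᵀ := by
  rw [Matrix.transpose_nonsing_inv]
  have hAA : A⁻¹ * A = 1 := Matrix.nonsing_inv_mul A hA
  have hBB : Bᵀ * (Bᵀ)⁻¹ = 1 := Matrix.mul_nonsing_inv _ (by rwa [Matrix.det_transpose])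
  calc A⁻¹ * Jm = A⁻¹ * (Jm * (Bᵀ * (Bᵀ)⁻¹)) := by rw [hBB, mul_one]
    _ = A⁻¹ * ((Jm * Bᵀ) * (Bᵀ)⁻¹) := by rw [mul_assoc]
    _ = A⁻¹ * ((A * Jm) * (Bᵀ)⁻¹) := by rw [h]
    _ = (A⁻¹ * A) * (Jm * (Bᵀ)⁻¹) := by simp only [← mul_assoc]
    _ = Jm * (Bᵀ)⁻¹ := by rw [hAA, one_mul]

lemma commute_T_zpow (Jm A B : Mat) (hA : IsUnit A.det) (hB : IsUnit B.det)
    (h : A * Jm = Jm * Bᵀ) (e : ℤ) (he : e = 1 ∨ e = -1) : A ^ e * Jm = Jm * (B ^ e)ᵀ := by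
  rcases he with rfl | rfl
  · simpa using h
  · rw [Matrix.zpow_neg_one, Matrix.zpow_neg_one]
    exact commute_T_inv Jm A B hA hB h

lemma detX_isUnit (M : ℂ) (hM0 : M ≠ 0) : IsUnit (!![M, 1; 0, M⁻¹] : Mat).det := by
  simp [Matrix.det_fin_two_of, mul_inv_cancel₀ hM0]

lemma detXt_isUnit (M : ℂ) (hM0 : M ≠ 0) : IsUnit (!![M⁻¹, 1; 0, M] : Mat).det := by
  simp [Matrix.det_fin_two_of, inv_mul_cancel₀ hM0]

lemma detY_isUnit (M lam : ℂ) (hM0 : M ≠ 0) : IsUnit (!![M, 0; lam, M⁻¹] : Mat).det := by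
  simp [Matrix.det_fin_two_of, mul_inv_cancel₀ hM0]

lemma PX_rel (M : ℂ) :
    (!![1, 0; M - M⁻¹, 1] : Mat) * !![M, 1; 0, M⁻¹]
      = !![M⁻¹, 1; 0, M] * !![1, 0; M - M⁻¹, 1] := by
  ext i j
  fin_cases i <;> fin_cases j <;>
    simp [Matrix.mul_apply, Fin.sum_univ_two] <;> ring

lemma PY_rel (M lam : ℂ) :
    (!![1, 0; M - M⁻¹, 1] : Mat) * !![M, 0; lam, M⁻¹]
      = !![M, 0; lam + (M - M⁻¹)^2, M⁻¹] * !![1, 0; M - M⁻¹, 1] := by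
  ext i j
  fin_cases i <;> fin_cases j <;>
    simp [Matrix.mul_apply, Fin.sum_univ_two] <;> ring

lemma tr2 (a b c d : ℂ) : (!![a, b; c, d] : Mat)ᵀ = !![a, c; b, d] := by
  ext i j
  fin_cases i <;> fin_cases j <;> simp

lemma XJ_rel (M lam : ℂ) :
    (!![M, 1; 0, M⁻¹] : Mat) * !![1, 0; 0, lam]
      = !![1, 0; 0, lam] * (!![M, 0; lam, M⁻¹] : Mat)ᵀ := by
  rw [tr2]
  ext i j
  fin_cases i <;> fin_cases j <;>
    simp [Matrix.mul_apply, Fin.sum_univ_two, Matrix.transpose_apply] <;> ring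

lemma YJ_rel (M lam : ℂ) :
    (!![M, 0; lam, M⁻¹] : Mat) * !![1, 0; 0, lam]
      = !![1, 0; 0, lam] * (!![M, 1; 0, M⁻¹] : Mat)ᵀ := by
  rw [tr2]
  ext i j
  fin_cases i <;> fin_cases j <;>
    simp [Matrix.mul_apply, Fin.sum_univ_two, Matrix.transpose_apply] <;> ring

lemma W_symmetry (M lam : ℂ) (hM0 : M ≠ 0) (n : ℕ) (hne : n % 2 = 0)
    (ε : ℕ → ℤ) (hε : ∀ i, 1 ≤ i → i ≤ n → ε i = 1 ∨ ε i = -1)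
    (hsym : ∀ i, 1 ≤ i → i ≤ n → ε i = ε (n + 1 - i)) :
    wp ε !![M, 1; 0, M⁻¹] !![M, 0; lam, M⁻¹] n * !![1, 0; 0, lam]
      = !![1, 0; 0, lam] * (wp ε !![M, 1; 0, M⁻¹] !![M, 0; lam, M⁻¹] n)ᵀ := by
  have hW : wp ε !![M, 1; 0, M⁻¹] !![M, 0; lam, M⁻¹] n
      = ((List.range n).map fun i =>
          (if (i + 1) % 2 = 1 then (!![M, 1; 0, M⁻¹] : Mat) else !![M, 0; lam, M⁻¹]) ^ ε (i + 1)).prod := rfl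
  rw [hW, Matrix.transpose_list_prod, List.map_map, reverse_map_range]
  symm
  refine commute_prod _ _ _ n ?_
  intro s hs
  simp only [Function.comp]
  have h1 : n - 1 - s + 1 = n - s := by omega
  have h2 : ε (n - s) = ε (s + 1) := by
    have h3 := hsym (s+1) (by omega) (by omega)
    rw [h3]
    congr 1
    omega
  rw [h1, h2]
  have he := hε (s+1) (by omega) (by omega)
  by_cases hs2 : (s+1) % 2 = 1
  · rw [if_neg (by omega), if_pos hs2]
    exact (commute_T_zpow _ _ _ (detX_isUnit M hM0) (detY_isUnit M lam hM0)
      (XJ_rel M lam) (ε (s+1)) he).symm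
  · rw [if_pos (by omega), if_neg hs2]
    exact (commute_T_zpow _ _ _ (detY_isUnit M lam hM0) (detX_isUnit M hM0)
      (YJ_rel M lam) (ε (s+1)) he).symm

end Sym
/-- With `X = [[M,1],[0,M⁻¹]]`, `Y = [[M,0],[λ,M⁻¹]]` and
`W = X^{ε₁} Y^{ε₂} ⋯ Y^{ε_{α−1}}`, the relation `W·X = Y·W` holds (i.e. `x ↦ X`,
`y ↦ Y` defines a representation of the 2-bridge kmot group
`G(ε) = ⟨x, y | wx = yw⟩`) if and only if `f_{α−1}(M,λ̃) = 0`, where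
`f_{α−1}(M,λ̃) = Σ_{k=0}^{(α−1)/2} c̃_{2k}^{α−1}(M,ε)·λ̃ᵏ` and `λ̃ = λ + z²`.  Thus
`f_{α−1}` is the Riley polynomial of `G(ε)`. -/
theorem riley_criterion_f (M : ℂ) (hM0 : M ≠ 0) (hM1 : M ≠ 1) (hMneg1 : M ≠ -1)
    (lam : ℂ) (α : ℕ) (hodd : Odd α) (hα : 3 ≤ α) (ε : ℕ → ℤ)
    (hε : ∀ i, 1 ≤ i → i ≤ α - 1 → ε i = 1 ∨ ε i = -1)
    (hsym : ∀ i, 1 ≤ i → i ≤ α - 1 → ε i = ε (α - i))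
    (lamT : ℂ) (hlamT : lamT = lam + (M - M⁻¹) ^ 2)
    (X Y W : Mat) (hX : X = !![M, 1; 0, M⁻¹]) (hY : Y = !![M, 0; lam, M⁻¹])
    (hW : W = Wword α ε X Y) :
    W * X = Y * W ↔
      ∑ k ∈ Finset.range ((α - 1) / 2 + 1), cT (α - 1) (2 * k) ε M * lamT ^ k = 0 := by
  set n := α - 1 with hn
  have hn2 : 2 ≤ n := by omega
  have hne : n % 2 = 0 := by
    rcases hodd with ⟨t, ht⟩
    omega
  have hz : (M - M⁻¹) ≠ 0 := by
    intro h
    have hMM : M * M = 1 := by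
      have h2 : M * (M - M⁻¹) = 0 := by rw [h, mul_zero]
      rw [mul_sub, mul_inv_cancel₀ hM0] at h2
      linear_combination h2
    rcases mul_self_eq_one_iff.mp hMM with h1 | h1
    · exact hM1 h1
    · exact hMneg1 h1
  have hsym' : ∀ i, 1 ≤ i → i ≤ n → ε i = ε (n + 1 - i) := by
    intro i h1 h2
    rw [hsym i h1 h2]
    congr 1
    omega
  have hWw : W = wp ε !![M, 1; 0, M⁻¹] !![M, 0; lam, M⁻¹] n := by
    rw [hW, hX, hY, Wword_eq_wp]
  have hPW : (!![1, 0; M - M⁻¹, 1] : Mat) * W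
      = wp ε !![M⁻¹, 1; 0, M] !![M, 0; lamT, M⁻¹] n * !![1, 0; M - M⁻¹, 1] := by
    rw [hWw]
    unfold wp
    refine commute_prod _ _ _ n ?_
    intro i hi
    have he := hε (i+1) (by omega) (by omega)
    by_cases hp : (i+1) % 2 = 1
    · rw [if_pos hp, if_pos hp]
      exact commute_zpow _ _ _ (detX_isUnit M hM0) (detXt_isUnit M hM0) (PX_rel M) _ he
    · rw [if_neg hp, if_neg hp, hlamT]
      exact commute_zpow _ _ _ (detY_isUnit M lam hM0) (detY_isUnit M _ hM0) (PY_rel M lam) _ he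
  set V := wp ε !![M⁻¹, 1; 0, M] !![M, 0; lamT, M⁻¹] n with hV
  have hV01 : V 0 1 = W 0 1 := by
    have h0 := congrFun (congrFun hPW 0) 1
    simp [Matrix.mul_apply, Fin.sum_univ_two] at h0
    linear_combination -h0
  have hV00 : V 0 0 = W 0 0 - (M - M⁻¹) * W 0 1 := by
    have h0 := congrFun (congrFun hPW 0) 0
    simp [Matrix.mul_apply, Fin.sum_univ_two] at h0
    rw [hV01] at h0
    linear_combination -h0
  have hsym10 : W 1 0 = lam * W 0 1 := by
    have hJ := W_symmetry M lam hM0 n hne ε hε hsym'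
    rw [← hWw] at hJ
    have h0 := congrFun (congrFun hJ 1) 0
    simp [Matrix.mul_apply, Fin.sum_univ_two, Matrix.transpose_apply] at h0
    linear_combination h0
  have hrow := (wp_row M lamT hM0 ε n hε n le_rfl).1
  rw [← hV] at hrow
  have hsum : (∑ k ∈ Finset.range (n/2 + 1), cT n (2*k) ε M * lamT ^ k)
      = ∑ k ∈ Finset.range (n+1), cT n (2*k) ε M * lamT ^ k := by
    refine Finset.sum_subset ?_ ?_
    · intro k hk
      simp only [Finset.mem_range] at hk ⊢
      omega
    · intro k hk hk2
      simp only [Finset.mem_range] at hk hk2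
      rw [cT_eq_zero_of_lt (by omega), zero_mul]
  constructor
  · intro h
    have h01 := congrFun (congrFun h 0) 1
    rw [hX, hY] at h01
    simp [Matrix.mul_apply, Fin.sum_univ_two] at h01
    rw [hsum, ← hrow, hV00]
    linear_combination h01
  · intro h
    have hV000 : V 0 0 = 0 := by
      rw [hrow, ← hsum]
      exact h
    have hW00 : W 0 0 = (M - M⁻¹) * W 0 1 := by
      rw [hV000] at hV00
      linear_combination -hV00
    rw [hX, hY]
    ext i j
    fin_cases i <;> fin_cases j
    · simp [Matrix.mul_apply, Fin.sum_univ_two]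
      ring
    · simp [Matrix.mul_apply, Fin.sum_univ_two]
      linear_combination hW00
    · simp [Matrix.mul_apply, Fin.sum_univ_two]
      linear_combination (M - M⁻¹) * hsym10 - lam * hW00
    · simp [Matrix.mul_apply, Fin.sum_univ_two]
      linear_combination hsym10
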